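/- arXiv:2203.03368 — 9 statements merged into one kernel-verified Lean document; each statement's English description precedes it below -/
import Mathlib

section
/- Let f : X × Y × Z → W be a bounded trilinear map between Banach spaces. Then f is Aron–Berner regular if and only if f^{t****s} = f^{****} = f^{s****t}. -/
open Filter Topology ContinuousLinearMap

set_option maxSynthPendingDepth 3
set_option synthInstance.maxHeartbeats 1000000
set_option maxHeartbeats 4000000

noncomputable section

section Defs

variable {A B C D : Type*}
  [NormedAddCommGroup A] [NormedSpace ℝ A]
  [NormedAddCommGroup B] [NormedSpace ℝ B]
  [NormedAddCommGroup C] [NormedSpace ℝ C]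
  [NormedAddCommGroup D] [NormedSpace ℝ D]

/-- The adjoint `g*` of a bounded trilinear map `g : A × B × C → D`, i.e. the bounded
trilinear map `g* : D* × A × B → C*` determined by `⟨g*(d*,a,b), c⟩ = ⟨d*, g(a,b,c)⟩`. -/
def triAdj (f : A →L[ℝ] B →L[ℝ] C →L[ℝ] D) :
    (D →L[ℝ] ℝ) →L[ℝ] A →L[ℝ] B →L[ℝ] C →L[ℝ] ℝ :=
  (((compL ℝ A (B →L[ℝ] C →L[ℝ] D) (B →L[ℝ] C →L[ℝ] ℝ)).comp
      (compL ℝ B (C →L[ℝ] D) (C →L[ℝ] ℝ))).comp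
      (compL ℝ C D ℝ)).flip f

lemma triAdj_apply (f : A →L[ℝ] B →L[ℝ] C →L[ℝ] D) (d' : D →L[ℝ] ℝ) (a : A) (b : B) (c : C) :
    triAdj f d' a b c = d' (f a b c) := rfl

/-- Flip of the first two arguments: `fⁱ(b,a,c) = f(a,b,c)`. -/
def flipI (f : A →L[ℝ] B →L[ℝ] C →L[ℝ] D) : B →L[ℝ] A →L[ℝ] C →L[ℝ] D := f.flip

/-- Flip of the last two arguments: `fʲ(a,c,b) = f(a,b,c)`. -/
def flipJ (f : A →L[ℝ] B →L[ℝ] C →L[ℝ] D) : A →L[ℝ] C →L[ℝ] B →L[ℝ] D :=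
  ((ContinuousLinearMap.flipₗᵢ ℝ B C D).toLinearIsometry.toContinuousLinearMap).comp f

lemma flipJ_apply (f : A →L[ℝ] B →L[ℝ] C →L[ℝ] D) (a : A) (c : C) (b : B) :
    flipJ f a c b = f a b c := rfl

/-- The cyclic flip `fᵗ(c,a,b) = f(a,b,c)`. -/
def flipT (f : A →L[ℝ] B →L[ℝ] C →L[ℝ] D) : C →L[ℝ] A →L[ℝ] B →L[ℝ] D := flipI (flipJ f)

/-- The cyclic flip `fˢ(b,c,a) = f(a,b,c)`. -/
def flipS (f : A →L[ℝ] B →L[ℝ] C →L[ℝ] D) : B →L[ℝ] C →L[ℝ] A →L[ℝ] D := flipJ (flipI f)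

/-- The full reversal `fʳ(c,b,a) = f(a,b,c)`. -/
def flipR (f : A →L[ℝ] B →L[ℝ] C →L[ℝ] D) : C →L[ℝ] B →L[ℝ] A →L[ℝ] D :=
  flipJ (flipI (flipJ f))

/-- The fourth adjoint `g**** : A** × B** × C** → D**`, which extends `g` to the biduals. -/
def triAdj4 (f : A →L[ℝ] B →L[ℝ] C →L[ℝ] D) :
    ((A →L[ℝ] ℝ) →L[ℝ] ℝ) →L[ℝ] ((B →L[ℝ] ℝ) →L[ℝ] ℝ) →L[ℝ] ((C →L[ℝ] ℝ) →L[ℝ] ℝ) →L[ℝ]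
      ((D →L[ℝ] ℝ) →L[ℝ] ℝ) :=
  triAdj (triAdj (triAdj (triAdj f)))

/-- The Aron–Berner extension `f****`. -/
def ext0 (f : A →L[ℝ] B →L[ℝ] C →L[ℝ] D) := triAdj4 f

/-- The Aron–Berner extension `f^{i****i}`:
`f^{i****i}(a**,b**,c**) = (fⁱ)****(b**,a**,c**)`. -/
def extI (f : A →L[ℝ] B →L[ℝ] C →L[ℝ] D) := flipI (triAdj4 (flipI f))

/-- The Aron–Berner extension `f^{j****j}`:
`f^{j****j}(a**,b**,c**) = (fʲ)****(a**,c**,b**)`. -/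
def extJ (f : A →L[ℝ] B →L[ℝ] C →L[ℝ] D) := flipJ (triAdj4 (flipJ f))

/-- The Aron–Berner extension `f^{r****r}`:
`f^{r****r}(a**,b**,c**) = (fʳ)****(c**,b**,a**)`. -/
def extR (f : A →L[ℝ] B →L[ℝ] C →L[ℝ] D) := flipR (triAdj4 (flipR f))

/-- The Aron–Berner extension `f^{t****s}`:
`f^{t****s}(a**,b**,c**) = (fᵗ)****(c**,a**,b**)`. -/
def extTS (f : A →L[ℝ] B →L[ℝ] C →L[ℝ] D) := flipS (triAdj4 (flipT f))

/-- The Aron–Berner extension `f^{s****t}`: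
`f^{s****t}(a**,b**,c**) = (fˢ)****(b**,c**,a**)`. -/
def extST (f : A →L[ℝ] B →L[ℝ] C →L[ℝ] D) := flipT (triAdj4 (flipS f))

/-- `f` is Aron–Berner regular when all six natural extensions coincide. -/
def AronBernerRegular (f : A →L[ℝ] B →L[ℝ] C →L[ℝ] D) : Prop :=
  ext0 f = extI f ∧ ext0 f = extJ f ∧ ext0 f = extR f ∧ ext0 f = extTS f ∧ ext0 f = extST f

/-- `f` is close-to-regular when `f^{t****s} = f^{s****t}`. -/
def CloseToRegular (f : A →L[ℝ] B →L[ℝ] C →L[ℝ] D) : Prop := extTS f = extST f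

end Defs

section Aux

variable {A B C D : Type*}
  [NormedAddCommGroup A] [NormedSpace ℝ A]
  [NormedAddCommGroup B] [NormedSpace ℝ B]
  [NormedAddCommGroup C] [NormedSpace ℝ C]
  [NormedAddCommGroup D] [NormedSpace ℝ D]

/-- Evaluation embedding into the double dual. -/
def evIota (b : B) : (B →L[ℝ] ℝ) →L[ℝ] ℝ := ContinuousLinearMap.apply ℝ ℝ b

lemma evIota_apply (b : B) (φ : B →L[ℝ] ℝ) : evIota b φ = φ b := rfl

variable (f : A →L[ℝ] B →L[ℝ] C →L[ℝ] D)

lemma keyI (c'' : (C →L[ℝ] ℝ) →L[ℝ] ℝ) (d' : D →L[ℝ] ℝ) (b : B) :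
    triAdj (triAdj (flipI f)) c'' d' b
      = triAdj (triAdj (triAdj f)) (evIota b) c'' d' := by
  ext a
  show c'' (triAdj (flipI f) d' b a) = c'' (triAdj f d' a b)
  exact congrArg (⇑c'') (by ext c; rfl)

lemma extI_eq_extST (h : ext0 f = extST f) : extI f = extST f := by
  ext a'' b'' c'' d'
  show b'' (triAdj (triAdj (triAdj (flipI f))) a'' c'' d')
      = b'' (triAdj (triAdj (triAdj (flipS f))) c'' a'' d')
  refine congrArg (⇑b'') ?_
  ext b
  show a'' (triAdj (triAdj (flipI f)) c'' d' b)
      = triAdj (triAdj (triAdj (flipS f))) c'' a'' d' b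
  rw [keyI f c'' d' b]
  exact congrArg (fun g => g a'' (evIota b) c'' d') h

lemma keyJ (b'' : (B →L[ℝ] ℝ) →L[ℝ] ℝ) (d' : D →L[ℝ] ℝ) (a : A) :
    triAdj (triAdj (flipJ f)) b'' d' a
      = triAdj (triAdj (triAdj (flipT f))) (evIota a) b'' d' := by
  ext c
  show b'' (triAdj (flipJ f) d' a c) = b'' (triAdj (flipT f) d' c a)
  exact congrArg (⇑b'') (by ext b; rfl)

lemma extJ_eq_ext0 (h : ext0 f = extTS f) : extJ f = ext0 f := by
  ext a'' b'' c'' d'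
  show a'' (triAdj (triAdj (triAdj (flipJ f))) c'' b'' d')
      = a'' (triAdj (triAdj (triAdj f)) b'' c'' d')
  refine congrArg (⇑a'') ?_
  ext a
  show c'' (triAdj (triAdj (flipJ f)) b'' d' a)
      = triAdj (triAdj (triAdj f)) b'' c'' d' a
  rw [keyJ f b'' d' a]
  exact (congrArg (fun g => g (evIota a) b'' c'' d') h).symm

lemma keyR (a'' : (A →L[ℝ] ℝ) →L[ℝ] ℝ) (d' : D →L[ℝ] ℝ) (c : C) :
    triAdj (triAdj (flipR f)) a'' d' c
      = triAdj (triAdj (triAdj (flipS f))) (evIota c) a'' d' := by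
  ext b
  show a'' (triAdj (flipR f) d' c b) = a'' (triAdj (flipS f) d' b c)
  exact congrArg (⇑a'') (by ext a; rfl)

lemma extR_eq_extTS (h : extTS f = extST f) : extR f = extTS f := by
  ext a'' b'' c'' d'
  show c'' (triAdj (triAdj (triAdj (flipR f))) b'' a'' d')
      = c'' (triAdj (triAdj (triAdj (flipT f))) a'' b'' d')
  refine congrArg (⇑c'') ?_
  ext c
  show b'' (triAdj (triAdj (flipR f)) a'' d' c)
      = triAdj (triAdj (triAdj (flipT f))) a'' b'' d' c
  rw [keyR f a'' d' c]
  exact (congrArg (fun g => g a'' b'' (evIota c) d') h).symm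

end Aux


theorem aronBernerRegular_iff_ts_eq_main_eq_st {X Y Z W : Type*}
    [NormedAddCommGroup X] [NormedSpace ℝ X] [CompleteSpace X]
    [NormedAddCommGroup Y] [NormedSpace ℝ Y] [CompleteSpace Y]
    [NormedAddCommGroup Z] [NormedSpace ℝ Z] [CompleteSpace Z]
    [NormedAddCommGroup W] [NormedSpace ℝ W] [CompleteSpace W]
    (f : X →L[ℝ] Y →L[ℝ] Z →L[ℝ] W) :
    AronBernerRegular f ↔ (extTS f = ext0 f ∧ ext0 f = extST f) := by
  constructor
  · rintro ⟨h1, h2, h3, h4, h5⟩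
    exact ⟨h4.symm, h5⟩
  · rintro ⟨h1, h2⟩
    have hTS : ext0 f = extTS f := h1.symm
    have hST : ext0 f = extST f := h2
    have hts : extTS f = extST f := h1.trans h2
    refine ⟨?_, ?_, ?_, hTS, hST⟩
    · exact ((extI_eq_extST f hST).trans hST.symm).symm
    · exact (extJ_eq_ext0 f hTS).symm
    · exact ((extR_eq_extTS f hts).trans hTS.symm).symm

end
end

section
/- Let f : X × Y × Z → W be a bounded trilinear map between Banach spaces. Then f is Aron–Berner regular if and only if f^{i****i} = f^{j****j} = f^{r****r}. -/
open Filter Topology ContinuousLinearMap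

set_option maxSynthPendingDepth 3
set_option synthInstance.maxHeartbeats 1000000
set_option maxHeartbeats 4000000

noncomputable section

section Key

variable {A B C D : Type*}
  [NormedAddCommGroup A] [NormedSpace ℝ A]
  [NormedAddCommGroup B] [NormedSpace ℝ B]
  [NormedAddCommGroup C] [NormedSpace ℝ C]
  [NormedAddCommGroup D] [NormedSpace ℝ D]

/-- Point evaluation as an element of the bidual. -/
local notation "Jd" => ContinuousLinearMap.apply ℝ ℝ

/-- `ext0` and `extI` agree when the first argument is a point evaluation. -/
lemma key1 (f : A →L[ℝ] B →L[ℝ] C →L[ℝ] D) (x : A)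
    (b'' : (B →L[ℝ] ℝ) →L[ℝ] ℝ) (c'' : (C →L[ℝ] ℝ) →L[ℝ] ℝ) (d' : D →L[ℝ] ℝ) :
    ext0 f (Jd x) b'' c'' d' = extI f (Jd x) b'' c'' d' := rfl

/-- `extJ` and `extTS` agree when the third argument is a point evaluation. -/
lemma key2 (f : A →L[ℝ] B →L[ℝ] C →L[ℝ] D) (z : C)
    (a'' : (A →L[ℝ] ℝ) →L[ℝ] ℝ) (b'' : (B →L[ℝ] ℝ) →L[ℝ] ℝ) (d' : D →L[ℝ] ℝ) :
    extJ f a'' b'' (Jd z) d' = extTS f a'' b'' (Jd z) d' := rfl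

/-- `extR` and `extST` agree when the second argument is a point evaluation. -/
lemma key3 (f : A →L[ℝ] B →L[ℝ] C →L[ℝ] D) (y : B)
    (a'' : (A →L[ℝ] ℝ) →L[ℝ] ℝ) (c'' : (C →L[ℝ] ℝ) →L[ℝ] ℝ) (d' : D →L[ℝ] ℝ) :
    extR f a'' (Jd y) c'' d' = extST f a'' (Jd y) c'' d' := rfl

end Key

theorem aronBernerRegular_iff_i_eq_j_eq_r {X Y Z W : Type*}
    [NormedAddCommGroup X] [NormedSpace ℝ X] [CompleteSpace X]
    [NormedAddCommGroup Y] [NormedSpace ℝ Y] [CompleteSpace Y]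
    [NormedAddCommGroup Z] [NormedSpace ℝ Z] [CompleteSpace Z]
    [NormedAddCommGroup W] [NormedSpace ℝ W] [CompleteSpace W]
    (f : X →L[ℝ] Y →L[ℝ] Z →L[ℝ] W) :
    AronBernerRegular f ↔ (extI f = extJ f ∧ extJ f = extR f) := by

  constructor
  · rintro ⟨h1, h2, h3, _, _⟩
    exact ⟨h1 ▸ h2, h2 ▸ h3⟩
  · rintro ⟨hIJ, hJR⟩
    have h0J : ext0 f = extJ f := by
      ext a'' b'' c'' d'
      show a'' (triAdj (triAdj (triAdj f)) b'' c'' d')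
          = a'' (triAdj (triAdj (triAdj (flipJ f))) c'' b'' d')
      congr 1
      ext x
      calc triAdj (triAdj (triAdj f)) b'' c'' d' x
          = ext0 f (ContinuousLinearMap.apply ℝ ℝ x) b'' c'' d' := rfl
        _ = extI f (ContinuousLinearMap.apply ℝ ℝ x) b'' c'' d' := key1 f x b'' c'' d'
        _ = extJ f (ContinuousLinearMap.apply ℝ ℝ x) b'' c'' d' := by rw [hIJ]
        _ = triAdj (triAdj (triAdj (flipJ f))) c'' b'' d' x := rfl
    have hTSR : extTS f = extR f := by
      ext a'' b'' c'' d'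
      show c'' (triAdj (triAdj (triAdj (flipT f))) a'' b'' d')
          = c'' (triAdj (triAdj (triAdj (flipR f))) b'' a'' d')
      congr 1
      ext z
      calc triAdj (triAdj (triAdj (flipT f))) a'' b'' d' z
          = extTS f a'' b'' (ContinuousLinearMap.apply ℝ ℝ z) d' := rfl
        _ = extJ f a'' b'' (ContinuousLinearMap.apply ℝ ℝ z) d' := (key2 f z a'' b'' d').symm
        _ = extR f a'' b'' (ContinuousLinearMap.apply ℝ ℝ z) d' := by rw [hJR]
        _ = triAdj (triAdj (triAdj (flipR f))) b'' a'' d' z := rfl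
    have hSTI : extST f = extI f := by
      ext a'' b'' c'' d'
      show b'' (triAdj (triAdj (triAdj (flipS f))) c'' a'' d')
          = b'' (triAdj (triAdj (triAdj (flipI f))) a'' c'' d')
      congr 1
      ext y
      calc triAdj (triAdj (triAdj (flipS f))) c'' a'' d' y
          = extST f a'' (ContinuousLinearMap.apply ℝ ℝ y) c'' d' := rfl
        _ = extR f a'' (ContinuousLinearMap.apply ℝ ℝ y) c'' d' := (key3 f y a'' c'' d').symm
        _ = extJ f a'' (ContinuousLinearMap.apply ℝ ℝ y) c'' d' := by rw [hJR]
        _ = extI f a'' (ContinuousLinearMap.apply ℝ ℝ y) c'' d' := by rw [hIJ]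
        _ = triAdj (triAdj (triAdj (flipI f))) a'' c'' d' y := rfl
    exact ⟨h0J.trans hIJ.symm, h0J, h0J.trans hJR, h0J.trans (hJR.trans hTSR.symm),
      h0J.trans (hIJ.symm.trans hSTI.symm)⟩

end
end

section
/- Let f : X × Y × Z → W be a bounded trilinear map between Banach spaces. If f^{****} = f^{t****s}, then f^{j****j} = f^{****}. -/
open Filter Topology ContinuousLinearMap

set_option maxSynthPendingDepth 3
set_option synthInstance.maxHeartbeats 1000000
set_option maxHeartbeats 4000000

noncomputable section

section Aux

variable {A B C D : Type*}
  [NormedAddCommGroup A] [NormedSpace ℝ A]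
  [NormedAddCommGroup B] [NormedSpace ℝ B]
  [NormedAddCommGroup C] [NormedSpace ℝ C]
  [NormedAddCommGroup D] [NormedSpace ℝ D]

/-- The canonical embedding of `A` into its bidual. -/
def iotaA (a : A) : (A →L[ℝ] ℝ) →L[ℝ] ℝ :=
  (ContinuousLinearMap.id ℝ (A →L[ℝ] ℝ)).flip a

lemma iotaA_apply (a : A) (φ : A →L[ℝ] ℝ) : iotaA a φ = φ a := rfl

lemma lemA (g : A →L[ℝ] B →L[ℝ] C →L[ℝ] D) (d' : D →L[ℝ] ℝ) (b : B) (a : A) :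
    triAdj (flipI g) d' b a = triAdj g d' a b := by
  ext c; rfl

lemma lemC' (g : A →L[ℝ] B →L[ℝ] C →L[ℝ] D) (a : A)
    (c'' : ((C →L[ℝ] ℝ) →L[ℝ] ℝ)) (d' : D →L[ℝ] ℝ) :
    triAdj (triAdj (triAdj (flipI g))) (iotaA a) c'' d'
      = triAdj (triAdj g) c'' d' a := by
  ext b
  exact congrArg c'' (lemA g d' b a)

lemma lemD (g : A →L[ℝ] B →L[ℝ] C →L[ℝ] D) (a : A)
    (b'' : ((B →L[ℝ] ℝ) →L[ℝ] ℝ)) (c'' : ((C →L[ℝ] ℝ) →L[ℝ] ℝ)) :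
    triAdj4 (flipI g) b'' (iotaA a) c'' = triAdj4 g (iotaA a) b'' c'' := by
  ext d'
  exact congrArg b'' (lemC' g a c'' d')

end Aux

theorem extJ_eq_ext0_of_ext0_eq_extTS {X Y Z W : Type*}
    [NormedAddCommGroup X] [NormedSpace ℝ X] [CompleteSpace X]
    [NormedAddCommGroup Y] [NormedSpace ℝ Y] [CompleteSpace Y]
    [NormedAddCommGroup Z] [NormedSpace ℝ Z] [CompleteSpace Z]
    [NormedAddCommGroup W] [NormedSpace ℝ W] [CompleteSpace W]
    (f : X →L[ℝ] Y →L[ℝ] Z →L[ℝ] W)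
    (h : ext0 f = extTS f) :
    extJ f = ext0 f := by
  refine ContinuousLinearMap.ext fun x'' => ?_
  refine ContinuousLinearMap.ext fun y'' => ?_
  refine ContinuousLinearMap.ext fun z'' => ?_
  refine ContinuousLinearMap.ext fun w' => ?_
  show x'' (triAdj (triAdj (triAdj (flipJ f))) z'' y'' w')
      = x'' (triAdj (triAdj (triAdj f)) y'' z'' w')
  refine congrArg x'' ?_
  refine ContinuousLinearMap.ext fun x => ?_
  have step1 : triAdj (triAdj (triAdj (flipJ f))) z'' y'' w' x
      = triAdj4 (flipI (flipJ f)) z'' (iotaA x) y'' w' := by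
    have := lemD (flipJ f) x z'' y''
    calc triAdj (triAdj (triAdj (flipJ f))) z'' y'' w' x
        = triAdj4 (flipJ f) (iotaA x) z'' y'' w' := rfl
      _ = triAdj4 (flipI (flipJ f)) z'' (iotaA x) y'' w' := by rw [this]
  have step2 : triAdj4 (flipI (flipJ f)) z'' (iotaA x) y'' w'
      = extTS f (iotaA x) y'' z'' w' := rfl
  have step3 : extTS f (iotaA x) y'' z'' w' = ext0 f (iotaA x) y'' z'' w' := by
    rw [← h]
  have step4 : ext0 f (iotaA x) y'' z'' w'
      = triAdj (triAdj (triAdj f)) y'' z'' w' x := rfl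
  rw [step1, step2, step3, step4]

end
end

section
/- Let f : X × Y × Z → W be a bounded trilinear map between Banach spaces. If f^{t****s} = f^{s****t} (i.e. f is close-to-regular), then f^{r****r} = f^{t****s}. -/
open Filter Topology ContinuousLinearMap

set_option maxSynthPendingDepth 3
set_option synthInstance.maxHeartbeats 1000000
set_option maxHeartbeats 4000000

noncomputable section

theorem extR_eq_extTS_of_closeToRegular {X Y Z W : Type*}
    [NormedAddCommGroup X] [NormedSpace ℝ X] [CompleteSpace X]
    [NormedAddCommGroup Y] [NormedSpace ℝ Y] [CompleteSpace Y]
    [NormedAddCommGroup Z] [NormedSpace ℝ Z] [CompleteSpace Z]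
    [NormedAddCommGroup W] [NormedSpace ℝ W] [CompleteSpace W]
    (f : X →L[ℝ] Y →L[ℝ] Z →L[ℝ] W)
    (h : extTS f = extST f) :
    extR f = extTS f := by
  ext x y z w
  -- Both sides evaluate `z` at an element of `Z*`.
  show z (triAdj (triAdj (triAdj (flipR f))) y x w) = z (triAdj (triAdj (triAdj (flipT f))) x y w)
  congr 1
  ext z'
  -- RHS at z' is `extTS f x y (ĵ z') w`; rewrite via hypothesis to `extST`.
  have hz : extTS f x y (NormedSpace.inclusionInDoubleDual ℝ Z z') w
      = extST f x y (NormedSpace.inclusionInDoubleDual ℝ Z z') w := by rw [h]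
  have h2 : triAdj (triAdj (triAdj (flipT f))) x y w z'
      = extTS f x y (NormedSpace.inclusionInDoubleDual ℝ Z z') w := rfl
  have h1 : triAdj (triAdj (triAdj (flipR f))) y x w z'
      = extST f x y (NormedSpace.inclusionInDoubleDual ℝ Z z') w := by
    show y _ = y _
    congr 1
  rw [h1, h2, hz]

end
end

section
/- Let f : X × Y × Z → W be a bounded trilinear map between Banach spaces. Then f is Aron–Berner regular if and only if both flip maps fᵗ : Z × X × Y → W and fˢ : Y × Z × X → W are close-to-regular. -/
open Filter Topology ContinuousLinearMap

set_option maxSynthPendingDepth 3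
set_option synthInstance.maxHeartbeats 1000000
set_option maxHeartbeats 4000000

noncomputable section

section Bridges

open NormedSpace

variable {A B C D : Type*}
  [NormedAddCommGroup A] [NormedSpace ℝ A]
  [NormedAddCommGroup B] [NormedSpace ℝ B]
  [NormedAddCommGroup C] [NormedSpace ℝ C]
  [NormedAddCommGroup D] [NormedSpace ℝ D]

lemma bridge_J (f : A →L[ℝ] B →L[ℝ] C →L[ℝ] D) (x : A)
    (y'' : (B →L[ℝ] ℝ) →L[ℝ] ℝ) (w' : D →L[ℝ] ℝ) :
    triAdj (triAdj (triAdj (flipT f))) (inclusionInDoubleDual ℝ A x) y'' w'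
      = triAdj (triAdj (flipJ f)) y'' w' x := by
  ext z
  exact congrArg y'' (by ext y; rfl)

lemma bridge_I1 (f : A →L[ℝ] B →L[ℝ] C →L[ℝ] D) (y : B)
    (z'' : (C →L[ℝ] ℝ) →L[ℝ] ℝ) (w' : D →L[ℝ] ℝ) :
    triAdj (triAdj (triAdj f)) (inclusionInDoubleDual ℝ B y) z'' w'
      = triAdj (triAdj (flipI f)) z'' w' y := by
  ext x
  exact congrArg z'' (by ext z; rfl)

lemma bridge_I2 (f : A →L[ℝ] B →L[ℝ] C →L[ℝ] D) (y : B)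
    (x'' : (A →L[ℝ] ℝ) →L[ℝ] ℝ) (w' : D →L[ℝ] ℝ) :
    triAdj (triAdj (triAdj (flipT f))) x'' (inclusionInDoubleDual ℝ B y) w'
      = triAdj (triAdj (flipS f)) x'' w' y := by
  ext z
  exact congrArg x'' (by ext x; rfl)

lemma bridge_R1 (f : A →L[ℝ] B →L[ℝ] C →L[ℝ] D) (z : C)
    (y'' : (B →L[ℝ] ℝ) →L[ℝ] ℝ) (w' : D →L[ℝ] ℝ) :
    triAdj (triAdj (triAdj f)) y'' (inclusionInDoubleDual ℝ C z) w'
      = triAdj (triAdj (flipT f)) y'' w' z := by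
  ext x
  exact congrArg y'' (by ext y; rfl)

lemma bridge_R2 (f : A →L[ℝ] B →L[ℝ] C →L[ℝ] D) (z : C)
    (x'' : (A →L[ℝ] ℝ) →L[ℝ] ℝ) (w' : D →L[ℝ] ℝ) :
    triAdj (triAdj (triAdj (flipS f))) (inclusionInDoubleDual ℝ C z) x'' w'
      = triAdj (triAdj (flipR f)) x'' w' z := by
  ext y
  exact congrArg x'' (by ext x; rfl)

end Bridges

theorem aronBernerRegular_iff_flipT_flipS_closeToRegular {X Y Z W : Type*}
    [NormedAddCommGroup X] [NormedSpace ℝ X] [CompleteSpace X]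
    [NormedAddCommGroup Y] [NormedSpace ℝ Y] [CompleteSpace Y]
    [NormedAddCommGroup Z] [NormedSpace ℝ Z] [CompleteSpace Z]
    [NormedAddCommGroup W] [NormedSpace ℝ W] [CompleteSpace W]
    (f : X →L[ℝ] Y →L[ℝ] Z →L[ℝ] W) :
    AronBernerRegular f ↔ (CloseToRegular (flipT f) ∧ CloseToRegular (flipS f)) := by
  have hT : CloseToRegular (flipT f) ↔ ext0 f = extST f := by
    constructor
    · intro h
      replace h : extTS (flipT f) = extST (flipT f) := h
      ext x'' y'' z'' w'
      have h' : extTS (flipT f) z'' x'' y'' w' = extST (flipT f) z'' x'' y'' w' := by rw [h]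
      exact h'.symm
    · intro h
      show extTS (flipT f) = extST (flipT f)
      ext z'' x'' y'' w'
      have h' : ext0 f x'' y'' z'' w' = extST f x'' y'' z'' w' := by rw [h]
      exact h'.symm
  have hS : CloseToRegular (flipS f) ↔ ext0 f = extTS f := by
    constructor
    · intro h
      replace h : extTS (flipS f) = extST (flipS f) := h
      ext x'' y'' z'' w'
      have h' : extTS (flipS f) y'' z'' x'' w' = extST (flipS f) y'' z'' x'' w' := by rw [h]
      exact h'
    · intro h
      show extTS (flipS f) = extST (flipS f)
      ext y'' z'' x'' w'
      have h' : ext0 f x'' y'' z'' w' = extTS f x'' y'' z'' w' := by rw [h]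
      exact h'
  rw [hT, hS]
  unfold AronBernerRegular
  constructor
  · rintro ⟨-, -, -, h4, h5⟩
    exact ⟨h5, h4⟩
  · rintro ⟨hST, hTS⟩
    have H1 : ∀ (x'' : (X →L[ℝ] ℝ) →L[ℝ] ℝ) (y'' : (Y →L[ℝ] ℝ) →L[ℝ] ℝ)
        (z'' : (Z →L[ℝ] ℝ) →L[ℝ] ℝ) (w' : W →L[ℝ] ℝ),
        x'' (triAdj (triAdj (triAdj f)) y'' z'' w')
          = y'' (triAdj (triAdj (triAdj (flipS f))) z'' x'' w') := by
      intro x'' y'' z'' w'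
      show ext0 f x'' y'' z'' w' = extST f x'' y'' z'' w'
      rw [hST]
    have H2 : ∀ (x'' : (X →L[ℝ] ℝ) →L[ℝ] ℝ) (y'' : (Y →L[ℝ] ℝ) →L[ℝ] ℝ)
        (z'' : (Z →L[ℝ] ℝ) →L[ℝ] ℝ) (w' : W →L[ℝ] ℝ),
        x'' (triAdj (triAdj (triAdj f)) y'' z'' w')
          = z'' (triAdj (triAdj (triAdj (flipT f))) x'' y'' w') := by
      intro x'' y'' z'' w'
      show ext0 f x'' y'' z'' w' = extTS f x'' y'' z'' w'
      rw [hTS]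
    refine ⟨?_, ?_, ?_, hTS, hST⟩
    · -- ext0 f = extI f
      ext x'' y'' z'' w'
      show x'' (triAdj (triAdj (triAdj f)) y'' z'' w')
          = y'' (triAdj (triAdj (triAdj (flipI f))) x'' z'' w')
      rw [H1]
      refine congrArg y'' ?_
      ext y
      have h2y := H2 x'' (NormedSpace.inclusionInDoubleDual ℝ Y y) z'' w'
      rw [bridge_I1, bridge_I2] at h2y
      exact h2y.symm
    · -- ext0 f = extJ f
      ext x'' y'' z'' w'
      show x'' (triAdj (triAdj (triAdj f)) y'' z'' w')
          = x'' (triAdj (triAdj (triAdj (flipJ f))) z'' y'' w')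
      refine congrArg x'' ?_
      ext x
      have h2x := H2 (NormedSpace.inclusionInDoubleDual ℝ X x) y'' z'' w'
      rw [bridge_J] at h2x
      exact h2x
    · -- ext0 f = extR f
      ext x'' y'' z'' w'
      show x'' (triAdj (triAdj (triAdj f)) y'' z'' w')
          = z'' (triAdj (triAdj (triAdj (flipR f))) y'' x'' w')
      rw [H2]
      refine congrArg z'' ?_
      ext z
      have h1z := H1 x'' y'' (NormedSpace.inclusionInDoubleDual ℝ Z z) w'
      rw [bridge_R1, bridge_R2] at h1z
      exact h1z

end
end

section
/- Let f : X × Y × Z → W be a bounded trilinear map between Banach spaces. Then f is Aron–Berner regular if and only if both flip maps fⁱ : Y × X × Z → W and fʳ : Z × Y × X → W are close-to-regular. -/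
open Filter Topology ContinuousLinearMap

set_option maxSynthPendingDepth 3
set_option synthInstance.maxHeartbeats 1000000
set_option maxHeartbeats 4000000

noncomputable section

section Aux

variable {A B C D : Type*}
  [NormedAddCommGroup A] [NormedSpace ℝ A]
  [NormedAddCommGroup B] [NormedSpace ℝ B]
  [NormedAddCommGroup C] [NormedSpace ℝ C]
  [NormedAddCommGroup D] [NormedSpace ℝ D]

/-- Canonical embedding into the double dual. -/
def iot : A →L[ℝ] ((A →L[ℝ] ℝ) →L[ℝ] ℝ) :=
  (ContinuousLinearMap.id ℝ (A →L[ℝ] ℝ)).flip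

lemma t4_as1 (f : A →L[ℝ] B →L[ℝ] C →L[ℝ] D) (x : ((A →L[ℝ] ℝ) →L[ℝ] ℝ))
    (y : ((B →L[ℝ] ℝ) →L[ℝ] ℝ)) (z : ((C →L[ℝ] ℝ) →L[ℝ] ℝ)) (w : D →L[ℝ] ℝ) :
    triAdj4 f x y z w = x (triAdj (triAdj (triAdj f)) y z w) := rfl

lemma t4_as2 (f : A →L[ℝ] B →L[ℝ] C →L[ℝ] D) (a : A)
    (y : ((B →L[ℝ] ℝ) →L[ℝ] ℝ)) (z : ((C →L[ℝ] ℝ) →L[ℝ] ℝ)) (w : D →L[ℝ] ℝ) :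
    triAdj4 f (iot a) y z w = y (triAdj (triAdj f) z w a) := rfl

lemma t4_as3 (f : A →L[ℝ] B →L[ℝ] C →L[ℝ] D) (a : A) (b : B)
    (z : ((C →L[ℝ] ℝ) →L[ℝ] ℝ)) (w : D →L[ℝ] ℝ) :
    triAdj4 f (iot a) (iot b) z w = z (triAdj f w a b) := rfl

lemma peelA (x : ((A →L[ℝ] ℝ) →L[ℝ] ℝ)) {φ ψ : A →L[ℝ] ℝ} (h : ∀ a, φ a = ψ a) :
    x φ = x ψ := congrArg x (ContinuousLinearMap.ext h)

lemma ft_fi (f : A →L[ℝ] B →L[ℝ] C →L[ℝ] D) : flipT (flipI f) = flipR f := by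
  ext c b a; rfl

lemma fs_fi (f : A →L[ℝ] B →L[ℝ] C →L[ℝ] D) : flipS (flipI f) = flipJ f := by
  ext a c b; rfl

lemma ft_fr (f : A →L[ℝ] B →L[ℝ] C →L[ℝ] D) : flipT (flipR f) = flipJ f := by
  ext a c b; rfl

lemma fs_fr (f : A →L[ℝ] B →L[ℝ] C →L[ℝ] D) : flipS (flipR f) = flipI f := by
  ext b a c; rfl

lemma fi_ft (f : A →L[ℝ] B →L[ℝ] C →L[ℝ] D) : flipI (flipT f) = flipJ f := by
  ext a c b; rfl

lemma fi_fs (f : A →L[ℝ] B →L[ℝ] C →L[ℝ] D) : flipI (flipS f) = flipR f := by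
  ext c b a; rfl

/-- Swap of the first two variables, both at points of the base spaces. -/
lemma swap12 (f : A →L[ℝ] B →L[ℝ] C →L[ℝ] D) (a : A) (b : B)
    (z : ((C →L[ℝ] ℝ) →L[ℝ] ℝ)) (w : D →L[ℝ] ℝ) :
    triAdj4 f (iot a) (iot b) z w = triAdj4 (flipI f) (iot b) (iot a) z w := by
  rw [t4_as3 f, t4_as3 (flipI f)]
  exact peelA z fun c => rfl

/-- Swap of the first two variables when the first is at a point. -/
lemma swap12' (f : A →L[ℝ] B →L[ℝ] C →L[ℝ] D) (a : A)
    (y : ((B →L[ℝ] ℝ) →L[ℝ] ℝ)) (z : ((C →L[ℝ] ℝ) →L[ℝ] ℝ)) (w : D →L[ℝ] ℝ) :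
    triAdj4 f (iot a) y z w = triAdj4 (flipI f) y (iot a) z w := by
  rw [t4_as2 f, t4_as1 (flipI f)]
  exact peelA y fun b => swap12 f a b z w

end Aux
section Aux2

variable {X Y Z W : Type*}
  [NormedAddCommGroup X] [NormedSpace ℝ X]
  [NormedAddCommGroup Y] [NormedSpace ℝ Y]
  [NormedAddCommGroup Z] [NormedSpace ℝ Z]
  [NormedAddCommGroup W] [NormedSpace ℝ W]

variable (f : X →L[ℝ] Y →L[ℝ] Z →L[ℝ] W)

lemma ctrI_iff : CloseToRegular (flipI f) ↔
    ∀ x y z w, triAdj4 (flipR f) z y x w = triAdj4 (flipJ f) x z y w := by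
  unfold CloseToRegular extTS extST
  rw [ft_fi f, fs_fi f]
  constructor
  · intro h x y z w
    exact DFunLike.congr_fun (DFunLike.congr_fun (DFunLike.congr_fun
      (DFunLike.congr_fun h y) x) z) w
  · intro h
    ext y x z w
    exact h x y z w

lemma ctrR_iff : CloseToRegular (flipR f) ↔
    ∀ x y z w, triAdj4 (flipJ f) x z y w = triAdj4 (flipI f) y x z w := by
  unfold CloseToRegular extTS extST
  rw [ft_fr f, fs_fr f]
  constructor
  · intro h x y z w
    exact DFunLike.congr_fun (DFunLike.congr_fun (DFunLike.congr_fun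
      (DFunLike.congr_fun h z) y) x) w
  · intro h
    ext z y x w
    exact h x y z w

lemma eqI_iff : (ext0 f = extI f) ↔
    ∀ x y z w, triAdj4 f x y z w = triAdj4 (flipI f) y x z w := by
  constructor
  · intro h x y z w
    exact DFunLike.congr_fun (DFunLike.congr_fun (DFunLike.congr_fun
      (DFunLike.congr_fun h x) y) z) w
  · intro h; ext x y z w; exact h x y z w

lemma eqJ_iff : (ext0 f = extJ f) ↔
    ∀ x y z w, triAdj4 f x y z w = triAdj4 (flipJ f) x z y w := by
  constructor
  · intro h x y z w
    exact DFunLike.congr_fun (DFunLike.congr_fun (DFunLike.congr_fun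
      (DFunLike.congr_fun h x) y) z) w
  · intro h; ext x y z w; exact h x y z w

lemma eqR_iff : (ext0 f = extR f) ↔
    ∀ x y z w, triAdj4 f x y z w = triAdj4 (flipR f) z y x w := by
  constructor
  · intro h x y z w
    exact DFunLike.congr_fun (DFunLike.congr_fun (DFunLike.congr_fun
      (DFunLike.congr_fun h x) y) z) w
  · intro h; ext x y z w; exact h x y z w

lemma eqTS_iff : (ext0 f = extTS f) ↔
    ∀ x y z w, triAdj4 f x y z w = triAdj4 (flipT f) z x y w := by
  constructor
  · intro h x y z w
    exact DFunLike.congr_fun (DFunLike.congr_fun (DFunLike.congr_fun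
      (DFunLike.congr_fun h x) y) z) w
  · intro h; ext x y z w; exact h x y z w

lemma eqST_iff : (ext0 f = extST f) ↔
    ∀ x y z w, triAdj4 f x y z w = triAdj4 (flipS f) y z x w := by
  constructor
  · intro h x y z w
    exact DFunLike.congr_fun (DFunLike.congr_fun (DFunLike.congr_fun
      (DFunLike.congr_fun h x) y) z) w
  · intro h; ext x y z w; exact h x y z w

end Aux2
section Core

variable {X Y Z W : Type*}
  [NormedAddCommGroup X] [NormedSpace ℝ X]
  [NormedAddCommGroup Y] [NormedSpace ℝ Y]
  [NormedAddCommGroup Z] [NormedSpace ℝ Z]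
  [NormedAddCommGroup W] [NormedSpace ℝ W]

variable (f : X →L[ℝ] Y →L[ℝ] Z →L[ℝ] W)

/-- Core step: if `extR = extJ` and `extJ = extI` (pointwise), then `ext0 = extJ`. -/
lemma coreJ
    (H2 : ∀ x y z w, triAdj4 (flipJ f) x z y w = triAdj4 (flipI f) y x z w) :
    ∀ x y z w, triAdj4 f x y z w = triAdj4 (flipJ f) x z y w := by
  intro x y z w
  rw [t4_as1 f, t4_as1 (flipJ f)]
  refine peelA x fun a => ?_
  calc triAdj (triAdj (triAdj f)) y z w a
      = triAdj4 f (iot a) y z w := rfl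
    _ = triAdj4 (flipI f) y (iot a) z w := swap12' f a y z w
    _ = triAdj4 (flipJ f) (iot a) z y w := (H2 (iot a) y z w).symm
    _ = triAdj (triAdj (triAdj (flipJ f))) z y w a := rfl

lemma coreTS
    (H1 : ∀ x y z w, triAdj4 (flipR f) z y x w = triAdj4 (flipJ f) x z y w) :
    ∀ x y z w, triAdj4 (flipT f) z x y w = triAdj4 (flipR f) z y x w := by
  intro x y z w
  rw [t4_as1 (flipT f), t4_as1 (flipR f)]
  refine peelA z fun c => ?_
  calc triAdj (triAdj (triAdj (flipT f))) x y w c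
      = triAdj4 (flipT f) (iot c) x y w := rfl
    _ = triAdj4 (flipI (flipT f)) x (iot c) y w := swap12' (flipT f) c x y w
    _ = triAdj4 (flipJ f) x (iot c) y w := by rw [fi_ft f]
    _ = triAdj4 (flipR f) (iot c) y x w := (H1 x y (iot c) w).symm
    _ = triAdj (triAdj (triAdj (flipR f))) y x w c := rfl

lemma coreST
    (H1 : ∀ x y z w, triAdj4 (flipR f) z y x w = triAdj4 (flipJ f) x z y w)
    (H2 : ∀ x y z w, triAdj4 (flipJ f) x z y w = triAdj4 (flipI f) y x z w) :
    ∀ x y z w, triAdj4 (flipS f) y z x w = triAdj4 (flipI f) y x z w := by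
  intro x y z w
  rw [t4_as1 (flipS f), t4_as1 (flipI f)]
  refine peelA y fun b => ?_
  calc triAdj (triAdj (triAdj (flipS f))) z x w b
      = triAdj4 (flipS f) (iot b) z x w := rfl
    _ = triAdj4 (flipI (flipS f)) z (iot b) x w := swap12' (flipS f) b z x w
    _ = triAdj4 (flipR f) z (iot b) x w := by rw [fi_fs f]
    _ = triAdj4 (flipJ f) x z (iot b) w := H1 x (iot b) z w
    _ = triAdj4 (flipI f) (iot b) x z w := H2 x (iot b) z w
    _ = triAdj (triAdj (triAdj (flipI f))) x z w b := rfl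

end Core
theorem aronBernerRegular_iff_flipI_flipR_closeToRegular {X Y Z W : Type*}
    [NormedAddCommGroup X] [NormedSpace ℝ X] [CompleteSpace X]
    [NormedAddCommGroup Y] [NormedSpace ℝ Y] [CompleteSpace Y]
    [NormedAddCommGroup Z] [NormedSpace ℝ Z] [CompleteSpace Z]
    [NormedAddCommGroup W] [NormedSpace ℝ W] [CompleteSpace W]
    (f : X →L[ℝ] Y →L[ℝ] Z →L[ℝ] W) :
    AronBernerRegular f ↔ (CloseToRegular (flipI f) ∧ CloseToRegular (flipR f)) := by
  rw [ctrI_iff f, ctrR_iff f]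
  unfold AronBernerRegular
  rw [eqI_iff f, eqJ_iff f, eqR_iff f, eqTS_iff f, eqST_iff f]
  constructor
  · rintro ⟨hI, hJ, hR, -, -⟩
    exact ⟨fun x y z w => (hR x y z w).symm.trans (hJ x y z w),
           fun x y z w => (hJ x y z w).symm.trans (hI x y z w)⟩
  · rintro ⟨H1, H2⟩
    have hJ := coreJ f H2
    have hI : ∀ x y z w, triAdj4 f x y z w = triAdj4 (flipI f) y x z w :=
      fun x y z w => (hJ x y z w).trans (H2 x y z w)
    have hR : ∀ x y z w, triAdj4 f x y z w = triAdj4 (flipR f) z y x w :=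
      fun x y z w => (hJ x y z w).trans (H1 x y z w).symm
    refine ⟨hI, hJ, hR, ?_, ?_⟩
    · exact fun x y z w => (hR x y z w).trans (coreTS f H1 x y z w).symm
    · exact fun x y z w => (hI x y z w).trans (coreST f H1 H2 x y z w).symm

end
end

section
/- Let f : X × Y × Z → W be a bounded trilinear map between Banach spaces. Then f is Aron–Berner regular if and only if both flip maps fⁱ : Y × X × Z → W and fʲ : X × Z × Y → W are close-to-regular. -/
open Filter Topology ContinuousLinearMap

set_option maxSynthPendingDepth 3
set_option synthInstance.maxHeartbeats 1000000
set_option maxHeartbeats 4000000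

noncomputable section

section Aux

variable {A B C D : Type*}
  [NormedAddCommGroup A] [NormedSpace ℝ A]
  [NormedAddCommGroup B] [NormedSpace ℝ B]
  [NormedAddCommGroup C] [NormedSpace ℝ C]
  [NormedAddCommGroup D] [NormedSpace ℝ D]

lemma congr_app {E : Type*} [NormedAddCommGroup E] [NormedSpace ℝ E]
    (x : (E →L[ℝ] ℝ) →L[ℝ] ℝ) {p q : E →L[ℝ] ℝ} (h : ∀ e, p e = q e) : x p = x q :=
  congrArg x (ContinuousLinearMap.ext h)

/-- canonical embedding into the bidual -/
def emb (E : Type*) [NormedAddCommGroup E] [NormedSpace ℝ E] :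
    E →L[ℝ] (E →L[ℝ] ℝ) →L[ℝ] ℝ := ContinuousLinearMap.apply ℝ ℝ

variable (f : A →L[ℝ] B →L[ℝ] C →L[ℝ] D)
variable (a'' : (A →L[ℝ] ℝ) →L[ℝ] ℝ) (b'' : (B →L[ℝ] ℝ) →L[ℝ] ℝ)
  (c'' : (C →L[ℝ] ℝ) →L[ℝ] ℝ) (d' : D →L[ℝ] ℝ)

lemma C1 : extTS (flipI f) b'' a'' c'' d' = extR f a'' b'' c'' d' :=
  congr_app c'' fun _ => congr_app b'' fun _ => congr_app a'' fun _ => rfl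

lemma C2 : extST (flipI f) b'' a'' c'' d' = extJ f a'' b'' c'' d' :=
  congr_app a'' fun _ => congr_app c'' fun _ => congr_app b'' fun _ => rfl

lemma C3 : extTS (flipJ f) a'' c'' b'' d' = extI f a'' b'' c'' d' :=
  congr_app b'' fun _ => congr_app a'' fun _ => congr_app c'' fun _ => rfl

lemma C4 : extST (flipJ f) a'' c'' b'' d' = extR f a'' b'' c'' d' :=
  congr_app c'' fun _ => congr_app b'' fun _ => congr_app a'' fun _ => rfl

lemma A1 (a : A) : ext0 f (emb A a) b'' c'' d' = extI f (emb A a) b'' c'' d' :=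
  congr_app b'' fun _ => congr_app c'' fun _ => rfl

lemma A2 (b : B) : ext0 f a'' (emb B b) c'' d' = extI f a'' (emb B b) c'' d' :=
  congr_app a'' fun _ => congr_app c'' fun _ => rfl

lemma A3 (c : C) : extTS f a'' b'' (emb C c) d' = ext0 f a'' b'' (emb C c) d' :=
  congr_app a'' fun _ => congr_app b'' fun _ => rfl

lemma A4 (b : B) : extST f a'' (emb B b) c'' d' = extR f a'' (emb B b) c'' d' :=
  congr_app c'' fun _ => congr_app a'' fun _ => rfl

end Aux

section Main

variable {A B C D : Type*}
  [NormedAddCommGroup A] [NormedSpace ℝ A]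
  [NormedAddCommGroup B] [NormedSpace ℝ B]
  [NormedAddCommGroup C] [NormedSpace ℝ C]
  [NormedAddCommGroup D] [NormedSpace ℝ D]

variable {f : A →L[ℝ] B →L[ℝ] C →L[ℝ] D}

lemma step1 (h1 : extJ f = extR f) (h2 : extI f = extR f) : ext0 f = extJ f := by
  have h1' : ∀ a b c d, extJ f a b c d = extR f a b c d := fun a b c d => by rw [h1]
  have h2' : ∀ a b c d, extI f a b c d = extR f a b c d := fun a b c d => by rw [h2]
  ext a'' b'' c'' d'
  exact congr_app a'' fun x =>
    (A1 f b'' c'' d' x).trans ((h2' _ _ _ _).trans (h1' _ _ _ _).symm)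

end Main

section Main2

variable {A B C D : Type*}
  [NormedAddCommGroup A] [NormedSpace ℝ A]
  [NormedAddCommGroup B] [NormedSpace ℝ B]
  [NormedAddCommGroup C] [NormedSpace ℝ C]
  [NormedAddCommGroup D] [NormedSpace ℝ D]

variable {f : A →L[ℝ] B →L[ℝ] C →L[ℝ] D}

lemma closeToRegular_flipI_iff : CloseToRegular (flipI f) ↔ extJ f = extR f := by
  constructor
  · intro h
    ext a'' b'' c'' d'
    rw [← C2 f a'' b'' c'' d', ← C1 f a'' b'' c'' d', h]
  · intro h
    ext b'' a'' c'' d'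
    rw [C1 f a'' b'' c'' d', C2 f a'' b'' c'' d', h]

lemma closeToRegular_flipJ_iff : CloseToRegular (flipJ f) ↔ extI f = extR f := by
  constructor
  · intro h
    ext a'' b'' c'' d'
    rw [← C3 f a'' b'' c'' d', ← C4 f a'' b'' c'' d', h]
  · intro h
    ext a'' c'' b'' d'
    rw [C3 f a'' b'' c'' d', C4 f a'' b'' c'' d', h]

lemma step2 (h0 : ext0 f = extR f) : extTS f = extR f := by
  have h0' : ∀ a b c d, ext0 f a b c d = extR f a b c d := fun a b c d => by rw [h0]
  ext a'' b'' c'' d'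
  exact congr_app c'' fun z => (A3 f a'' b'' d' z).trans (h0' _ _ _ _)

lemma step3 (h2 : extI f = extR f) : extST f = extI f := by
  have h2' : ∀ a b c d, extI f a b c d = extR f a b c d := fun a b c d => by rw [h2]
  ext a'' b'' c'' d'
  exact congr_app b'' fun y => (A4 f a'' c'' d' y).trans (h2' _ _ _ _).symm


end Main2
theorem aronBernerRegular_iff_flipI_flipJ_closeToRegular {X Y Z W : Type*}
    [NormedAddCommGroup X] [NormedSpace ℝ X] [CompleteSpace X]
    [NormedAddCommGroup Y] [NormedSpace ℝ Y] [CompleteSpace Y]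
    [NormedAddCommGroup Z] [NormedSpace ℝ Z] [CompleteSpace Z]
    [NormedAddCommGroup W] [NormedSpace ℝ W] [CompleteSpace W]
    (f : X →L[ℝ] Y →L[ℝ] Z →L[ℝ] W) :
    AronBernerRegular f ↔ (CloseToRegular (flipI f) ∧ CloseToRegular (flipJ f)) := by
  rw [closeToRegular_flipI_iff, closeToRegular_flipJ_iff]
  constructor
  · rintro ⟨hI, hJ, hR, hTS, hST⟩
    exact ⟨hJ.symm.trans hR, hI.symm.trans hR⟩
  · rintro ⟨h1, h2⟩
    have e0J : ext0 f = extJ f := step1 h1 h2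
    have e0R : ext0 f = extR f := e0J.trans h1
    refine ⟨e0R.trans h2.symm, e0J, e0R, e0R.trans (step2 e0R).symm,
      e0R.trans (h2.symm.trans (step3 h2).symm)⟩

end
end

section
/- Let X, Y, Z, W, S be Banach spaces, let m : X × Y → S and g : S × Z → W be bounded bilinear maps, and let f : X × Y × Z → W be the bounded trilinear map defined by f(x,y,z) = g(m(x,y),z). If m and g are Arens regular, then f is Aron–Berner regular. -/
open Filter Topology ContinuousLinearMap

set_option maxSynthPendingDepth 3
set_option synthInstance.maxHeartbeats 1000000
set_option maxHeartbeats 4000000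

noncomputable section

section Bilinear

variable {A B C : Type*}
  [NormedAddCommGroup A] [NormedSpace ℝ A]
  [NormedAddCommGroup B] [NormedSpace ℝ B]
  [NormedAddCommGroup C] [NormedSpace ℝ C]

/-- The adjoint `m*` of a bounded bilinear map `m : A × B → C`, i.e. the bounded bilinear
map `m* : C* × A → B*` determined by `⟨m*(c*,a), b⟩ = ⟨c*, m(a,b)⟩`. -/
def biAdj (m : A →L[ℝ] B →L[ℝ] C) : (C →L[ℝ] ℝ) →L[ℝ] A →L[ℝ] B →L[ℝ] ℝ :=
  ((compL ℝ A (B →L[ℝ] C) (B →L[ℝ] ℝ)).comp (compL ℝ B C ℝ)).flip m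

lemma biAdj_apply (m : A →L[ℝ] B →L[ℝ] C) (c' : C →L[ℝ] ℝ) (a : A) (b : B) :
    biAdj m c' a b = c' (m a b) := rfl

/-- The first Arens extension `m*** : A** × B** → C**` of a bounded bilinear map. -/
def biAdj3 (m : A →L[ℝ] B →L[ℝ] C) :
    ((A →L[ℝ] ℝ) →L[ℝ] ℝ) →L[ℝ] ((B →L[ℝ] ℝ) →L[ℝ] ℝ) →L[ℝ] ((C →L[ℝ] ℝ) →L[ℝ] ℝ) :=
  biAdj (biAdj (biAdj m))

/-- The second Arens extension `m^{r***r} : A** × B** → C**` of a bounded bilinear map. -/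
def arens2 (m : A →L[ℝ] B →L[ℝ] C) :
    ((A →L[ℝ] ℝ) →L[ℝ] ℝ) →L[ℝ] ((B →L[ℝ] ℝ) →L[ℝ] ℝ) →L[ℝ] ((C →L[ℝ] ℝ) →L[ℝ] ℝ) :=
  (biAdj3 m.flip).flip

/-- A bounded bilinear map is Arens regular when its two Arens extensions coincide. -/
def ArensRegular (m : A →L[ℝ] B →L[ℝ] C) : Prop := biAdj3 m = arens2 m

end Bilinear

section MyAux

variable {A B S Z W : Type*}
  [NormedAddCommGroup A] [NormedSpace ℝ A]
  [NormedAddCommGroup B] [NormedSpace ℝ B]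
  [NormedAddCommGroup S] [NormedSpace ℝ S]
  [NormedAddCommGroup Z] [NormedSpace ℝ Z]
  [NormedAddCommGroup W] [NormedSpace ℝ W]

/-- Fourth adjoint of a trilinear map which is a bilinear composition in the last variable. -/
lemma comp_last_adj4 (g : S →L[ℝ] Z →L[ℝ] W) (q : A →L[ℝ] B →L[ℝ] S)
    (h : A →L[ℝ] B →L[ℝ] Z →L[ℝ] W) (hh : ∀ a b z, h a b z = g (q a b) z)
    (a'' : (A →L[ℝ] ℝ) →L[ℝ] ℝ) (b'' : (B →L[ℝ] ℝ) →L[ℝ] ℝ)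
    (z'' : (Z →L[ℝ] ℝ) →L[ℝ] ℝ) (w' : W →L[ℝ] ℝ) :
    triAdj4 h a'' b'' z'' w' = biAdj3 g (biAdj3 q a'' b'') z'' w' := by
  have h1 : ∀ (w' : W →L[ℝ] ℝ) (a : A) (b : B),
      triAdj h w' a b = biAdj g w' (q a b) := by
    intro w' a b; ext z; exact congrArg w' (hh a b z)
  have h2 : ∀ (z'' : (Z →L[ℝ] ℝ) →L[ℝ] ℝ) (w' : W →L[ℝ] ℝ) (a : A),
      triAdj (triAdj h) z'' w' a = biAdj q (biAdj (biAdj g) z'' w') a := by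
    intro z'' w' a; ext b; exact congrArg z'' (h1 w' a b)
  have h3 : ∀ (b'' : (B →L[ℝ] ℝ) →L[ℝ] ℝ) (z'' : (Z →L[ℝ] ℝ) →L[ℝ] ℝ)
      (w' : W →L[ℝ] ℝ),
      triAdj (triAdj (triAdj h)) b'' z'' w'
        = biAdj (biAdj q) b'' (biAdj (biAdj g) z'' w') := by
    intro b'' z'' w'; ext a; exact congrArg b'' (h2 z'' w' a)
  exact congrArg a'' (h3 b'' z'' w')

/-- Fourth adjoint of a trilinear map which is a bilinear composition in the first variable. -/
lemma comp_first_adj4 (g : S →L[ℝ] Z →L[ℝ] W) (q : A →L[ℝ] B →L[ℝ] S)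
    (h : Z →L[ℝ] A →L[ℝ] B →L[ℝ] W) (hh : ∀ z a b, h z a b = g (q a b) z)
    (z'' : (Z →L[ℝ] ℝ) →L[ℝ] ℝ) (a'' : (A →L[ℝ] ℝ) →L[ℝ] ℝ)
    (b'' : (B →L[ℝ] ℝ) →L[ℝ] ℝ) (w' : W →L[ℝ] ℝ) :
    triAdj4 h z'' a'' b'' w' = arens2 g (biAdj3 q a'' b'') z'' w' := by
  have h1 : ∀ (w' : W →L[ℝ] ℝ) (z : Z) (a : A),
      triAdj h w' z a = biAdj q (biAdj g.flip w' z) a := by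
    intro w' z a; ext b; exact congrArg w' (hh z a b)
  have h2 : ∀ (b'' : (B →L[ℝ] ℝ) →L[ℝ] ℝ) (w' : W →L[ℝ] ℝ) (z : Z),
      triAdj (triAdj h) b'' w' z = biAdj (biAdj q) b'' (biAdj g.flip w' z) := by
    intro b'' w' z; ext a; exact congrArg b'' (h1 w' z a)
  have h3 : ∀ (a'' : (A →L[ℝ] ℝ) →L[ℝ] ℝ) (b'' : (B →L[ℝ] ℝ) →L[ℝ] ℝ)
      (w' : W →L[ℝ] ℝ),
      triAdj (triAdj (triAdj h)) a'' b'' w'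
        = biAdj (biAdj g.flip) (biAdj3 q a'' b'') w' := by
    intro a'' b'' w'; ext z; exact congrArg a'' (h2 b'' w' z)
  exact congrArg z'' (h3 a'' b'' w')

/-- Fourth adjoint of a trilinear map which is a bilinear composition in the middle
variable, assuming Arens regularity of the outer bilinear map. -/
lemma comp_mid_adj4 (g : S →L[ℝ] Z →L[ℝ] W) (hg : ArensRegular g)
    (q : A →L[ℝ] B →L[ℝ] S)
    (h : A →L[ℝ] Z →L[ℝ] B →L[ℝ] W) (hh : ∀ a z b, h a z b = g (q a b) z)
    (a'' : (A →L[ℝ] ℝ) →L[ℝ] ℝ) (z'' : (Z →L[ℝ] ℝ) →L[ℝ] ℝ)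
    (b'' : (B →L[ℝ] ℝ) →L[ℝ] ℝ) (w' : W →L[ℝ] ℝ) :
    triAdj4 h a'' z'' b'' w' = biAdj3 g (biAdj3 q a'' b'') z'' w' := by
  have h1 : ∀ (w' : W →L[ℝ] ℝ) (a : A) (z : Z),
      triAdj h w' a z = biAdj q (biAdj g.flip w' z) a := by
    intro w' a z; ext b; exact congrArg w' (hh a z b)
  have h2 : ∀ (b'' : (B →L[ℝ] ℝ) →L[ℝ] ℝ) (w' : W →L[ℝ] ℝ) (a : A),
      triAdj (triAdj h) b'' w' a
        = biAdj (biAdj g.flip)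
            ((ContinuousLinearMap.apply ℝ ℝ a).comp (biAdj (biAdj q) b'')) w' := by
    intro b'' w' a; ext z; exact congrArg b'' (h1 w' a z)
  have h3 : ∀ (z'' : (Z →L[ℝ] ℝ) →L[ℝ] ℝ) (b'' : (B →L[ℝ] ℝ) →L[ℝ] ℝ)
      (w' : W →L[ℝ] ℝ),
      triAdj (triAdj (triAdj h)) z'' b'' w'
        = biAdj (biAdj q) b'' (biAdj (biAdj g) z'' w') := by
    intro z'' b'' w'; ext a
    have e : biAdj3 g ((ContinuousLinearMap.apply ℝ ℝ a).comp (biAdj (biAdj q) b''))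
          z'' w'
        = arens2 g ((ContinuousLinearMap.apply ℝ ℝ a).comp (biAdj (biAdj q) b''))
          z'' w' := by rw [hg]
    exact (congrArg z'' (h2 b'' w' a)).trans e.symm
  exact congrArg a'' (h3 z'' b'' w')

end MyAux

theorem aronBernerRegular_of_arensRegular_comp {X Y Z W S : Type*}
    [NormedAddCommGroup X] [NormedSpace ℝ X] [CompleteSpace X]
    [NormedAddCommGroup Y] [NormedSpace ℝ Y] [CompleteSpace Y]
    [NormedAddCommGroup Z] [NormedSpace ℝ Z] [CompleteSpace Z]
    [NormedAddCommGroup W] [NormedSpace ℝ W] [CompleteSpace W]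
    [NormedAddCommGroup S] [NormedSpace ℝ S] [CompleteSpace S]
    (m : X →L[ℝ] Y →L[ℝ] S) (g : S →L[ℝ] Z →L[ℝ] W)
    (f : X →L[ℝ] Y →L[ℝ] Z →L[ℝ] W)
    (hf : ∀ x y z, f x y z = g (m x y) z)
    (hm : ArensRegular m)
    (hg : ArensRegular g) :
    AronBernerRegular f := by
  have hm' : ∀ (x'' : (X →L[ℝ] ℝ) →L[ℝ] ℝ) (y'' : (Y →L[ℝ] ℝ) →L[ℝ] ℝ),
      arens2 m x'' y'' = biAdj3 m x'' y'' := by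
    intro x'' y''; rw [hm]
  have hg' : ∀ (s'' : (S →L[ℝ] ℝ) →L[ℝ] ℝ) (z'' : (Z →L[ℝ] ℝ) →L[ℝ] ℝ)
      (w' : W →L[ℝ] ℝ), arens2 g s'' z'' w' = biAdj3 g s'' z'' w' := by
    intro s'' z'' w'; rw [hg]
  have e0 : ∀ (x'' : (X →L[ℝ] ℝ) →L[ℝ] ℝ) (y'' : (Y →L[ℝ] ℝ) →L[ℝ] ℝ)
      (z'' : (Z →L[ℝ] ℝ) →L[ℝ] ℝ) (w' : W →L[ℝ] ℝ),
      ext0 f x'' y'' z'' w' = biAdj3 g (biAdj3 m x'' y'') z'' w' :=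
    fun x'' y'' z'' w' => comp_last_adj4 g m f hf x'' y'' z'' w'
  have eI : ∀ (x'' : (X →L[ℝ] ℝ) →L[ℝ] ℝ) (y'' : (Y →L[ℝ] ℝ) →L[ℝ] ℝ)
      (z'' : (Z →L[ℝ] ℝ) →L[ℝ] ℝ) (w' : W →L[ℝ] ℝ),
      extI f x'' y'' z'' w' = biAdj3 g (biAdj3 m x'' y'') z'' w' := by
    intro x'' y'' z'' w'
    calc extI f x'' y'' z'' w'
        = biAdj3 g (arens2 m x'' y'') z'' w' :=
          comp_last_adj4 g m.flip (flipI f) (fun y x z => hf x y z) y'' x'' z'' w'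
      _ = biAdj3 g (biAdj3 m x'' y'') z'' w' := by rw [hm']
  have eJ : ∀ (x'' : (X →L[ℝ] ℝ) →L[ℝ] ℝ) (y'' : (Y →L[ℝ] ℝ) →L[ℝ] ℝ)
      (z'' : (Z →L[ℝ] ℝ) →L[ℝ] ℝ) (w' : W →L[ℝ] ℝ),
      extJ f x'' y'' z'' w' = biAdj3 g (biAdj3 m x'' y'') z'' w' :=
    fun x'' y'' z'' w' =>
      comp_mid_adj4 g hg m (flipJ f) (fun x z y => hf x y z) x'' z'' y'' w'
  have eR : ∀ (x'' : (X →L[ℝ] ℝ) →L[ℝ] ℝ) (y'' : (Y →L[ℝ] ℝ) →L[ℝ] ℝ)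
      (z'' : (Z →L[ℝ] ℝ) →L[ℝ] ℝ) (w' : W →L[ℝ] ℝ),
      extR f x'' y'' z'' w' = biAdj3 g (biAdj3 m x'' y'') z'' w' := by
    intro x'' y'' z'' w'
    calc extR f x'' y'' z'' w'
        = arens2 g (arens2 m x'' y'') z'' w' :=
          comp_first_adj4 g m.flip (flipR f) (fun z y x => hf x y z) z'' y'' x'' w'
      _ = biAdj3 g (biAdj3 m x'' y'') z'' w' := by rw [hm', hg']
  have eTS : ∀ (x'' : (X →L[ℝ] ℝ) →L[ℝ] ℝ) (y'' : (Y →L[ℝ] ℝ) →L[ℝ] ℝ)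
      (z'' : (Z →L[ℝ] ℝ) →L[ℝ] ℝ) (w' : W →L[ℝ] ℝ),
      extTS f x'' y'' z'' w' = biAdj3 g (biAdj3 m x'' y'') z'' w' := by
    intro x'' y'' z'' w'
    calc extTS f x'' y'' z'' w'
        = arens2 g (biAdj3 m x'' y'') z'' w' :=
          comp_first_adj4 g m (flipT f) (fun z x y => hf x y z) z'' x'' y'' w'
      _ = biAdj3 g (biAdj3 m x'' y'') z'' w' := by rw [hg']
  have eST : ∀ (x'' : (X →L[ℝ] ℝ) →L[ℝ] ℝ) (y'' : (Y →L[ℝ] ℝ) →L[ℝ] ℝ)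
      (z'' : (Z →L[ℝ] ℝ) →L[ℝ] ℝ) (w' : W →L[ℝ] ℝ),
      extST f x'' y'' z'' w' = biAdj3 g (biAdj3 m x'' y'') z'' w' := by
    intro x'' y'' z'' w'
    calc extST f x'' y'' z'' w'
        = biAdj3 g (arens2 m x'' y'') z'' w' :=
          comp_mid_adj4 g hg m.flip (flipS f) (fun y z x => hf x y z) y'' z'' x'' w'
      _ = biAdj3 g (biAdj3 m x'' y'') z'' w' := by rw [hm']
  refine ⟨?_, ?_, ?_, ?_, ?_⟩ <;>
    · ext x'' y'' z'' w'
      first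
      | exact (e0 x'' y'' z'' w').trans (eI x'' y'' z'' w').symm
      | exact (e0 x'' y'' z'' w').trans (eJ x'' y'' z'' w').symm
      | exact (e0 x'' y'' z'' w').trans (eR x'' y'' z'' w').symm
      | exact (e0 x'' y'' z'' w').trans (eTS x'' y'' z'' w').symm
      | exact (e0 x'' y'' z'' w').trans (eST x'' y'' z'' w').symm

end
end

section
/- Let X, Y, Z, W, S be Banach spaces, let m : X × Y → S and g : S × Z → W be bounded bilinear maps, and let f : X × Y × Z → W be the bounded trilinear map defined by f(x,y,z) = g(m(x,y),z). Then for all x** ∈ X**, y** ∈ Y**, z** ∈ Z**, f^{r****r}(x**,y**,z**) = g^{r***r}(m^{r***r}(x**,y**), z**). -/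
open Filter Topology ContinuousLinearMap

set_option maxSynthPendingDepth 3
set_option synthInstance.maxHeartbeats 1000000
set_option maxHeartbeats 4000000

noncomputable section

theorem extR_comp_eq {X Y Z W S : Type*}
    [NormedAddCommGroup X] [NormedSpace ℝ X] [CompleteSpace X]
    [NormedAddCommGroup Y] [NormedSpace ℝ Y] [CompleteSpace Y]
    [NormedAddCommGroup Z] [NormedSpace ℝ Z] [CompleteSpace Z]
    [NormedAddCommGroup W] [NormedSpace ℝ W] [CompleteSpace W]
    [NormedAddCommGroup S] [NormedSpace ℝ S] [CompleteSpace S]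
    (m : X →L[ℝ] Y →L[ℝ] S) (g : S →L[ℝ] Z →L[ℝ] W)
    (f : X →L[ℝ] Y →L[ℝ] Z →L[ℝ] W)
    (hf : ∀ x y z, f x y z = g (m x y) z) :
    ∀ (x'' : (X →L[ℝ] ℝ) →L[ℝ] ℝ) (y'' : (Y →L[ℝ] ℝ) →L[ℝ] ℝ) (z'' : (Z →L[ℝ] ℝ) →L[ℝ] ℝ),
      extR f x'' y'' z'' = arens2 g (arens2 m x'' y'') z'' := by
  have h1 : ∀ (w' : W →L[ℝ] ℝ) (z : Z) (y : Y),
      triAdj (flipR f) w' z y = biAdj m.flip (biAdj g.flip w' z) y := by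
    intro w' z y
    ext x
    show w' (f x y z) = w' (g (m x y) z)
    rw [hf]
  have h2 : ∀ (x'' : (X →L[ℝ] ℝ) →L[ℝ] ℝ) (w' : W →L[ℝ] ℝ) (z : Z),
      triAdj (triAdj (flipR f)) x'' w' z
        = biAdj (biAdj m.flip) x'' (biAdj g.flip w' z) := by
    intro x'' w' z
    ext y
    exact congrArg x'' (h1 w' z y)
  have h3 : ∀ (y'' : (Y →L[ℝ] ℝ) →L[ℝ] ℝ) (x'' : (X →L[ℝ] ℝ) →L[ℝ] ℝ)
      (w' : W →L[ℝ] ℝ),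
      triAdj (triAdj (triAdj (flipR f))) y'' x'' w'
        = biAdj (biAdj g.flip) (arens2 m x'' y'') w' := by
    intro y'' x'' w'
    ext z
    exact congrArg y'' (h2 x'' w' z)
  intro x'' y'' z''
  ext w'
  exact congrArg z'' (h3 y'' x'' w')

end
end
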